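/- The set Ē = ℝ² × ℝ × ℝ equipped with the multiplication (v, A, B)·(v', A', B') = (v + v', A + A' + D/2, B + B' + v₂·A' + (2·v₂ + v'₂)·D/6), where D = v₁·v'₂ − v₂·v'₁, is a group: the multiplication is associative, ((0,0), 0, 0) is a two-sided identity, and ((−v₁, −v₂), −A, −B + v₂·A) is a two-sided inverse of ((v₁, v₂), A, B). -/
import Mathlib


noncomputable section

/-- The multiplication on `Ē = ℝ² × ℝ × ℝ`:
`(v, A, B)·(v', A', B') = (v + v', A + A' + D/2, B + B' + v₂·A' + (2·v₂ + v'₂)·D/6)`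
where `D = v₁·v'₂ − v₂·v'₁`. -/
def emul (g h : (ℝ × ℝ) × ℝ × ℝ) : (ℝ × ℝ) × ℝ × ℝ :=
  (g.1 + h.1,
   g.2.1 + h.2.1 + (g.1.1 * h.1.2 - g.1.2 * h.1.1) / 2,
   g.2.2 + h.2.2 + g.1.2 * h.2.1
     + (2 * g.1.2 + h.1.2) * (g.1.1 * h.1.2 - g.1.2 * h.1.1) / 6)

/-- The proposed identity element `((0,0), 0, 0)`. -/
def eone : (ℝ × ℝ) × ℝ × ℝ := ((0, 0), 0, 0)

/-- The proposed inverse `((−v₁, −v₂), −A, −B + v₂·A)` of `((v₁, v₂), A, B)`. -/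
def einv (g : (ℝ × ℝ) × ℝ × ℝ) : (ℝ × ℝ) × ℝ × ℝ :=
  ((-g.1.1, -g.1.2), -g.2.1, -g.2.2 + g.1.2 * g.2.1)

/-- `Ē = ℝ² × ℝ × ℝ` with the multiplication `emul` is a group:
the multiplication is associative, `((0,0), 0, 0)` is a two-sided identity, and
`((−v₁, −v₂), −A, −B + v₂·A)` is a two-sided inverse of `((v₁, v₂), A, B)`. -/
theorem engel_is_group :
    (∀ g h k : (ℝ × ℝ) × ℝ × ℝ, emul (emul g h) k = emul g (emul h k)) ∧
    (∀ g : (ℝ × ℝ) × ℝ × ℝ, emul eone g = g ∧ emul g eone = g) ∧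
    (∀ g : (ℝ × ℝ) × ℝ × ℝ, emul (einv g) g = eone ∧ emul g (einv g) = eone) := by
  refine ⟨fun g h k => ?_, fun g => ⟨?_, ?_⟩, fun g => ⟨?_, ?_⟩⟩ <;>
    simp only [emul, eone, einv, Prod.mk.injEq, Prod.ext_iff, Prod.mk_add_mk, Prod.fst_add, Prod.snd_add] <;>
    refine ⟨⟨by ring, by ring⟩, by ring, by ring⟩
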